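/- Let 1 ≤ k < n be integers. There is a constant C = C(n,k) > 0 such that for all admissible codes x = (a, b¹,…,b^k) and x' = (a', b'¹,…,b'^k) with (b¹,…,b^k) ≠ (b'¹,…,b'^k), and all 0 < δ ≤ 1, L^n(P(x)_δ ∩ P(x')_δ ∩ S) ≤ C · δ^{n−k+1} / max_{1≤i≤k} ‖bⁱ−b'ⁱ‖_∞. -/

import Mathlib

open scoped ENNReal
open MeasureTheory

/-- For a code `x = (a, b¹, …, bᵏ)`, the `k`-dimensional affine subspace
`P(x) = {(t, a + t₁b¹ + ⋯ + t_k bᵏ) : t ∈ ℝᵏ}` of `ℝⁿ ≅ ℝᵏ × ℝ^{n-k}` in graph form. -/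
def affGraph (n k : ℕ) (x : (Fin (n - k) → ℝ) × (Fin k → Fin (n - k) → ℝ)) :
    Set ((Fin k → ℝ) × (Fin (n - k) → ℝ)) :=
  {p | ∃ t : Fin k → ℝ, p = (t, x.1 + ∑ i, t i • x.2 i)}

/-- A code `x = (a, b¹, …, bᵏ)` is admissible if `a ∈ [-1/2,1/2]^{n-k}` and
`a + bⁱ ∈ [-1/2,1/2]^{n-k}` for all `i`. -/
def admissibleCode (n k : ℕ) (x : (Fin (n - k) → ℝ) × (Fin k → Fin (n - k) → ℝ)) : Prop :=
  (∀ j, |x.1 j| ≤ 1 / 2) ∧ ∀ i j, |x.1 j + x.2 i j| ≤ 1 / 2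

/-- The set `S = C_simplex × [-1/2,1/2]^{n-k} ⊆ ℝᵏ × ℝ^{n-k}`, where `C_simplex` is the convex
hull of `{0, e₁, …, e_k}` in `ℝᵏ`. -/
def simplexCube (n k : ℕ) : Set ((Fin k → ℝ) × (Fin (n - k) → ℝ)) :=
  {p | p.1 ∈ convexHull ℝ
        (insert 0 (Set.range fun i : Fin k => (Pi.single i 1 : Fin k → ℝ))) ∧
       ∀ j, |p.2 j| ≤ 1 / 2}

/-!
A point `(t, y)` of `P(x)_δ` satisfies `‖y - (a + ∑ tᵢ bⁱ)‖_∞ ≤ (k + 1) δ`, because admissible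
slopes have sup norm at most `1`. Pick the entry `(i₀, j₀)` at which `‖bⁱ - b'ⁱ‖_∞` attains its
maximum `M`. On `P(x)_δ ∩ P(x')_δ` the `j₀`-th coordinates of the two graphs over `t` differ by at
most `2 (k + 1) δ`, so `t` lies in a slab of width `4 (k + 1) δ / M` across the direction `e_{i₀}`,
intersected with the unit cube containing the simplex, and `y` lies in a sup-norm ball of radius
`(k + 1) δ` around the graph of `x`. Fubini bounds the volume by
`4 (k + 1) δ / M · (2 (k + 1) δ)^{n-k}`.
-/

open Set Metric

theorem exists_dist_eq_dist_apply {ι : Type*} [Fintype ι] [Nonempty ι] {π : ι → Type*}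
    [∀ i, PseudoMetricSpace (π i)] (x y : ∀ i, π i) : ∃ i, dist x y = dist (x i) (y i) := by
  obtain ⟨i, -, hi⟩ :=
    Finset.univ.exists_max_image (fun i => dist (x i) (y i)) Finset.univ_nonempty
  exact ⟨i, le_antisymm ((dist_pi_le_iff dist_nonneg).2 fun j => hi j (Finset.mem_univ j))
    (dist_le_pi_dist x y i)⟩

theorem exists_dist_eq_abs_sub_of_ne {ι κ : Type*} [Fintype ι] [Fintype κ] {x y : ι → κ → ℝ}
    (h : x ≠ y) : ∃ i j, dist x y = |x i j - y i j| := by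
  obtain ⟨i₀, j₀, -⟩ : ∃ i j, x i j ≠ y i j := by
    by_contra! hxy
    exact h (funext₂ hxy)
  have : Nonempty ι := ⟨i₀⟩
  have : Nonempty κ := ⟨j₀⟩
  obtain ⟨i, hi⟩ := exists_dist_eq_dist_apply x y
  obtain ⟨j, hj⟩ := exists_dist_eq_dist_apply (x i) (y i)
  exact ⟨i, j, by rw [hi, hj, Real.dist_eq]⟩

theorem convexHull_insert_zero_range_single_subset {ι : Type*} [DecidableEq ι] :
    convexHull ℝ (insert 0 (range fun i : ι => (Pi.single i 1 : ι → ℝ))) ⊆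
      univ.pi fun _ => Icc 0 1 := by
  refine convexHull_min ?_ (convex_pi fun _ _ => convex_Icc 0 1)
  rintro t (rfl | ⟨i, rfl⟩) j -
  · simp
  · rcases eq_or_ne j i with rfl | hji <;> simp [*]

section graphMap

variable {ι E : Type*} [Fintype ι] [SeminormedAddCommGroup E] [NormedSpace ℝ E]

def graphMap (x : E × (ι → E)) (t : ι → ℝ) : E :=
  x.1 + ∑ i, t i • x.2 i

theorem graphMap_sub (x x' : E × (ι → E)) (t : ι → ℝ) :
    graphMap (x - x') t = graphMap x t - graphMap x' t := by
  simp only [graphMap, Prod.fst_sub, Prod.snd_sub, Pi.sub_apply, smul_sub,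
    Finset.sum_sub_distrib]
  abel

theorem continuous_graphMap (x : E × (ι → E)) : Continuous (graphMap x) := by
  unfold graphMap
  fun_prop

theorem dist_graphMap_le (x : E × (ι → E)) (s t : ι → ℝ) :
    dist (graphMap x s) (graphMap x t) ≤ ∑ i, dist (s i) (t i) * ‖x.2 i‖ := by
  rw [dist_eq_norm, graphMap, graphMap, add_sub_add_left_eq_sub, ← Finset.sum_sub_distrib]
  refine (norm_sum_le _ _).trans (Finset.sum_le_sum fun i _ => ?_)
  rw [← sub_smul, norm_smul, Real.dist_eq, Real.norm_eq_abs]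

end graphMap

theorem graphMap_apply {ι κ : Type*} [Fintype ι] [Fintype κ] (x : (κ → ℝ) × (ι → κ → ℝ))
    (t : ι → ℝ) (j : κ) : graphMap x t j = x.1 j + ∑ i, t i * x.2 i j := by
  simp [graphMap, Finset.sum_apply]

theorem mem_affGraph_iff {n k : ℕ} {x : (Fin (n - k) → ℝ) × (Fin k → Fin (n - k) → ℝ)}
    {p : (Fin k → ℝ) × (Fin (n - k) → ℝ)} : p ∈ affGraph n k x ↔ p.2 = graphMap x p.1 := by
  constructor
  · rintro ⟨t, rfl⟩
    rfl
  · intro h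
    exact ⟨p.1, Prod.ext rfl h⟩

theorem dist_graphMap_le_of_mem_thickening {n k : ℕ}
    {x : (Fin (n - k) → ℝ) × (Fin k → Fin (n - k) → ℝ)} {L δ : ℝ} (hL : ∀ i, ‖x.2 i‖ ≤ L)
    {p : (Fin k → ℝ) × (Fin (n - k) → ℝ)} (hp : p ∈ thickening δ (affGraph n k x)) :
    dist p.2 (graphMap x p.1) ≤ (1 + k * L) * δ := by
  obtain ⟨q, hq, hpq⟩ := mem_thickening_iff.1 hp
  rw [mem_affGraph_iff] at hq
  rw [Prod.dist_eq, max_lt_iff] at hpq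
  have hslope : dist (graphMap x q.1) (graphMap x p.1) ≤ k * L * δ := calc
    _ ≤ ∑ i, dist (q.1 i) (p.1 i) * ‖x.2 i‖ := dist_graphMap_le x q.1 p.1
    _ ≤ ∑ _i : Fin k, δ * L := by
      gcongr with i
      · exact dist_nonneg.trans hpq.1.le
      · exact (dist_le_pi_dist _ _ i).trans (dist_comm p.1 q.1 ▸ hpq.1.le)
      · exact hL i
    _ = k * L * δ := by simp; ring
  calc dist p.2 (graphMap x p.1) ≤ dist p.2 q.2 + dist (graphMap x q.1) (graphMap x p.1) := by
        rw [hq]; exact dist_triangle _ _ _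
    _ ≤ δ + k * L * δ := add_le_add hpq.2.le hslope
    _ = (1 + k * L) * δ := by ring

theorem norm_slope_le_one_of_admissibleCode {n k : ℕ}
    {x : (Fin (n - k) → ℝ) × (Fin k → Fin (n - k) → ℝ)} (hx : admissibleCode n k x) (i : Fin k) :
    ‖x.2 i‖ ≤ 1 := by
  refine (pi_norm_le_iff_of_nonneg zero_le_one).2 fun j => ?_
  rw [Real.norm_eq_abs]
  have := abs_sub (x.1 j + x.2 i j) (x.1 j)
  rw [add_sub_cancel_left] at this
  linarith [hx.1 j, hx.2 i j]

theorem prod_setOf_mem_closedBall_le {α β : Type*} [MeasurableSpace α] [PseudoMetricSpace β]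
    [MeasurableSpace β] [OpensMeasurableSpace β] [SecondCountableTopology β]
    (μ : Measure α) (ν : Measure β) [SFinite ν] {f : α → β} (hf : Measurable f)
    (T : Set α) (r : ℝ) {V : ℝ≥0∞} (hV : ∀ a, ν (closedBall (f a) r) ≤ V) :
    μ.prod ν {p | p.1 ∈ T ∧ p.2 ∈ closedBall (f p.1) r} ≤ μ T * V := by
  set T' := toMeasurable μ T
  have hT' : MeasurableSet T' := measurableSet_toMeasurable μ T
  have hmeas : MeasurableSet {p : α × β | p.1 ∈ T' ∧ p.2 ∈ closedBall (f p.1) r} :=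
    (measurable_fst hT').inter
      (measurableSet_le (measurable_snd.dist (hf.comp measurable_fst)) measurable_const)
  calc μ.prod ν {p | p.1 ∈ T ∧ p.2 ∈ closedBall (f p.1) r}
      ≤ μ.prod ν {p | p.1 ∈ T' ∧ p.2 ∈ closedBall (f p.1) r} :=
        measure_mono fun p hp => ⟨subset_toMeasurable μ T hp.1, hp.2⟩
    _ = ∫⁻ a, ν (Prod.mk a ⁻¹' {p | p.1 ∈ T' ∧ p.2 ∈ closedBall (f p.1) r}) ∂μ :=
        Measure.prod_apply hmeas
    _ ≤ ∫⁻ a, T'.indicator (fun _ => V) a ∂μ := by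
        refine lintegral_mono fun a => ?_
        by_cases ha : a ∈ T'
        · rw [indicator_of_mem ha]
          exact (measure_mono fun b hb => hb.2).trans (hV a)
        · simp [ha, preimage]
    _ = μ T * V := by
        rw [lintegral_indicator_const hT', measure_toMeasurable, mul_comm]

theorem volume_pi_Icc_inter_slab_le {k : ℕ} (c : Fin k → ℝ) (α ε : ℝ) {i₀ : Fin k}
    (hc : c i₀ ≠ 0) :
    volume {t : Fin k → ℝ | t ∈ univ.pi (fun _ => Icc 0 1) ∧ |α + ∑ i, t i * c i| ≤ ε} ≤
      ENNReal.ofReal (2 * ε / |c i₀|) := by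
  obtain ⟨m, rfl⟩ := Nat.exists_eq_add_one_of_ne_zero i₀.pos.ne'
  let e := (MeasurableEquiv.piFinSuccAbove (fun _ => ℝ) i₀).trans MeasurableEquiv.prodComm
  have he : MeasurePreserving e volume volume :=
    Measure.measurePreserving_swap.comp (measurePreserving_piFinSuccAbove (fun _ => volume) i₀)
  let g : (Fin m → ℝ) → ℝ := fun r => -(α + ∑ j, r j * c (i₀.succAbove j)) / c i₀
  rw [← (he.symm e).measure_preimage_equiv]
  calc volume (e.symm ⁻¹' _)
      ≤ volume {q : (Fin m → ℝ) × ℝ |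
          q.1 ∈ univ.pi (fun _ => Icc 0 1) ∧ q.2 ∈ closedBall (g q.1) (ε / |c i₀|)} := by
        refine measure_mono ?_
        rintro ⟨r, s⟩ hrs
        have he_symm : e.symm (r, s) = Fin.insertNth i₀ s r := rfl
        rw [mem_preimage, he_symm, mem_ofPred_eq, Fin.sum_univ_succAbove _ i₀] at hrs
        simp only [Fin.insertNth_apply_same, Fin.insertNth_apply_succAbove] at hrs
        obtain ⟨hcube, hslab⟩ := hrs
        refine ⟨fun j _ => by simpa using hcube (i₀.succAbove j) trivial, ?_⟩
        have hslab_eq : (s - g r) * c i₀ = α + (s * c i₀ + ∑ j, r j * c (i₀.succAbove j)) := by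
          simp only [g]
          field_simp
          ring
        rwa [mem_closedBall, Real.dist_eq, le_div_iff₀ (abs_pos.2 hc), ← abs_mul, hslab_eq]
    _ ≤ volume (univ.pi fun _ : Fin m => Icc (0 : ℝ) 1) * ENNReal.ofReal (2 * (ε / |c i₀|)) :=
        prod_setOf_mem_closedBall_le _ _ (by fun_prop) _ _ fun r => (Real.volume_closedBall _ _).le
    _ = ENNReal.ofReal (2 * ε / |c i₀|) := by
        simp [Real.volume_Icc_pi, mul_div_assoc]

theorem volume_inter_thickenings_le_of_different_slopes_general (n k : ℕ) :
    ∃ C : ℝ, 0 < C ∧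
      ∀ x x' : (Fin (n - k) → ℝ) × (Fin k → Fin (n - k) → ℝ),
        admissibleCode n k x → admissibleCode n k x' →
        x.2 ≠ x'.2 →
        ∀ δ : ℝ, 0 < δ → δ ≤ 1 →
          volume (Metric.thickening δ (affGraph n k x) ∩
              Metric.thickening δ (affGraph n k x') ∩ simplexCube n k) ≤
            ENNReal.ofReal (C * δ ^ (n - k + 1) / dist x.2 x'.2) := by
  refine ⟨4 * (1 + k) * (2 * (1 + k)) ^ (n - k), by positivity, ?_⟩
  intro x x' hx hx' hne δ hδ _
  obtain ⟨i₀, j₀, hdist⟩ := exists_dist_eq_abs_sub_of_ne hne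
  have hpos : 0 < dist x.2 x'.2 := dist_pos.2 hne
  have hc : (x - x').2 i₀ j₀ ≠ 0 := abs_pos.1 (hdist ▸ hpos)
  set ε := (1 + k * 1 : ℝ) * δ with hε
  have hsub : thickening δ (affGraph n k x) ∩ thickening δ (affGraph n k x') ∩ simplexCube n k ⊆
      {p | p.1 ∈ {t | t ∈ univ.pi (fun _ => Icc 0 1) ∧
          |(x - x').1 j₀ + ∑ i, t i * (x - x').2 i j₀| ≤ 2 * ε} ∧
        p.2 ∈ closedBall (graphMap x p.1) ε} := by
    rintro p ⟨⟨hp, hp'⟩, hpS⟩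
    have h := dist_graphMap_le_of_mem_thickening (norm_slope_le_one_of_admissibleCode hx) hp
    have h' := dist_graphMap_le_of_mem_thickening (norm_slope_le_one_of_admissibleCode hx') hp'
    refine ⟨⟨convexHull_insert_zero_range_single_subset hpS.1, ?_⟩, h⟩
    rw [← graphMap_apply, graphMap_sub, Pi.sub_apply, ← Real.dist_eq]
    calc _ ≤ dist (graphMap x p.1) (graphMap x' p.1) := dist_le_pi_dist _ _ j₀
      _ ≤ dist p.2 (graphMap x p.1) + dist p.2 (graphMap x' p.1) := dist_triangle_left _ _ _
      _ ≤ 2 * ε := by linarith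
  calc _ ≤ _ := measure_mono hsub
    _ ≤ ENNReal.ofReal (2 * (2 * ε) / dist x.2 x'.2) * ENNReal.ofReal ((2 * ε) ^ (n - k)) := by
        rw [Measure.volume_eq_prod]
        refine (prod_setOf_mem_closedBall_le _ _ (continuous_graphMap x).measurable _ _
          (V := ENNReal.ofReal ((2 * ε) ^ (n - k))) fun t => ?_).trans ?_
        · rw [Real.volume_pi_closedBall _ (by positivity), Fintype.card_fin]
        · rw [hdist]
          gcongr
          exact volume_pi_Icc_inter_slab_le _ _ _ hc
    _ = _ := by
        rw [← ENNReal.ofReal_mul (by positivity),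
          show 2 * ε = 2 * (1 + k) * δ by rw [hε]; ring, mul_pow, pow_succ]
        congr 1
        field_simp
        ring

theorem volume_inter_thickenings_le_of_different_slopes
    (n k : ℕ) (hk : 1 ≤ k) (hkn : k < n) :
    ∃ C : ℝ, 0 < C ∧
      ∀ x x' : (Fin (n - k) → ℝ) × (Fin k → Fin (n - k) → ℝ),
        admissibleCode n k x → admissibleCode n k x' →
        x.2 ≠ x'.2 →
        ∀ δ : ℝ, 0 < δ → δ ≤ 1 →
          volume (Metric.thickening δ (affGraph n k x) ∩
              Metric.thickening δ (affGraph n k x') ∩ simplexCube n k) ≤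
            ENNReal.ofReal (C * δ ^ (n - k + 1) / dist x.2 x'.2) :=
  volume_inter_thickenings_le_of_different_slopes_general n k
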